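/- Let N ≥ 1, let w_1,…,w_N > 0, u_1,…,u_N ∈ ℝ, σ² > 0, and let ρ, U, θ ∈ ℝ. If Σ_{i=1}^N w_i·Δ_j(u_i, σ²) = ρ·Δ_j(U, θ) holds for every j = 0, 1, …, 2N, then necessarily u_1 = u_2 = … = u_N = U, σ² = θ, and Σ_{i=1}^N w_i = ρ. (Equilibrium states of the Gaussian-EQMOM moment system for the BGK collision model lie in Ω_W^{eq}.) -/

import Mathlib

/-- `Δ_j(u,t) = Σ_{k=0}^{⌊j/2⌋} (j!/(k!(j−2k)!))·(t/2)^k·u^{j−2k}`; for `t > 0` this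
is the `j`-th moment of the Gaussian density with mean `u` and variance `t`. -/
noncomputable def DeltaFun (j : ℕ) (u t : ℝ) : ℝ :=
  ∑ k ∈ Finset.range (j/2 + 1),
    ((j.factorial : ℝ) / ((k.factorial : ℝ) * ((j - 2*k).factorial : ℝ)))
      * (t/2)^k * u^(j - 2*k)

/-!
Write `L_{u,t} p = (exp (t/2 · D²) p)(u)` for the Gaussian expectation of a polynomial `p`, so
that `Δ_j(u,t) = L_{u,t}(X^j)`. The heat operators `exp (t/2 · D²)` form a group, so feeding
`exp (-σ²/2 · D²) p` into the moment identities deconvolves them: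
`∑ wᵢ p(uᵢ) = ρ L_{U,θ-σ²} p` whenever `deg p ≤ 2N`. The test polynomials `1` and `(X - U)²` give
`∑ wᵢ = ρ` and `∑ wᵢ (uᵢ - U)² = ρ (θ - σ²)`, so `θ ≥ σ²`. The test polynomial `q²` with
`q = ∏ (X - uᵢ)` gives `ρ L_{U,θ-σ²}(q²) = 0`, which rules out `θ > σ²`: by the Wick formula
`L_{u,τ}(q²) = ∑ τᵏ/k! · L_{u,τ}(q⁽ᵏ⁾)²`, and the term `k = deg q` is positive.
-/

open Finset

namespace Polynomial

section Heat

variable {K : Type*} [Field K]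

noncomputable def heatTrunc (t : K) (B : ℕ) : K[X] →ₗ[K] K[X] :=
  ∑ k ∈ range B, ((t / 2) ^ k / k.factorial) • derivative ^ (2 * k)

theorem heatTrunc_apply (t : K) (B : ℕ) (p : K[X]) :
    heatTrunc t B p = ∑ k ∈ range B, ((t / 2) ^ k / k.factorial) • derivative^[2 * k] p := by
  simp only [heatTrunc, LinearMap.sum_apply, LinearMap.smul_apply, Module.End.pow_apply]

theorem heatTrunc_eq_of_le {t : K} {B B' : ℕ} {p : K[X]} (hB : p.natDegree < 2 * B)
    (hBB' : B ≤ B') : heatTrunc t B p = heatTrunc t B' p := by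
  rw [heatTrunc_apply, heatTrunc_apply]
  refine sum_subset (range_subset_range.2 hBB') fun k _ hk => ?_
  rw [iterate_derivative_eq_zero (by simp at hk; omega), smul_zero]

theorem heatTrunc_eq {t : K} {B B' : ℕ} {p : K[X]} (hB : p.natDegree < 2 * B)
    (hB' : p.natDegree < 2 * B') : heatTrunc t B p = heatTrunc t B' p := by
  rcases le_total B B' with h | h
  · exact heatTrunc_eq_of_le hB h
  · exact (heatTrunc_eq_of_le hB' h).symm

/-- The heat operator `exp (t/2 · D²)`: for `t > 0` it maps `p` to `x ↦ 𝔼 p(x + √t Z)`, `Z` a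
standard Gaussian. -/
noncomputable def heat (t : K) : K[X] →ₗ[K] K[X] where
  toFun p := heatTrunc t (p.natDegree + 1) p
  map_add' p q := by
    have hB {r : K[X]} (hr : r.natDegree ≤ max p.natDegree q.natDegree) :
        heatTrunc t (r.natDegree + 1) r = heatTrunc t (max p.natDegree q.natDegree + 1) r :=
      heatTrunc_eq (by omega) (by omega)
    rw [hB (natDegree_add_le p q), hB (le_max_left _ _), hB (le_max_right _ _), map_add]
  map_smul' c p := by
    rw [heatTrunc_eq (p := c • p) (B' := p.natDegree + 1) (by omega)
      (by have := natDegree_smul_le c p; omega), map_smul, RingHom.id_apply]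

theorem heat_eq_sum {t : K} {B : ℕ} {p : K[X]} (hB : p.natDegree < 2 * B) :
    heat t p = ∑ k ∈ range B, ((t / 2) ^ k / k.factorial) • derivative^[2 * k] p :=
  (heatTrunc_eq (by omega) hB).trans (heatTrunc_apply t B p)

theorem natDegree_heat_le (t : K) (p : K[X]) : (heat t p).natDegree ≤ p.natDegree := by
  rw [heat_eq_sum (B := p.natDegree + 1) (by omega)]
  refine natDegree_sum_le_of_forall_le _ _ fun k _ => (natDegree_smul_le _ _).trans ?_
  exact (natDegree_iterate_derivative _ _).trans (Nat.sub_le _ _)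

theorem heat_zero (p : K[X]) : heat 0 p = p := by
  rw [heat_eq_sum (B := p.natDegree + 1) (by omega), sum_range_succ']
  simp

theorem heat_C (t a : K) : heat t (C a) = C a := by
  rw [heat_eq_sum (B := 1) (by simp)]
  simp

theorem heat_one (t : K) : heat t 1 = 1 := by
  simpa using heat_C t 1

theorem heat_derivative (t : K) (p : K[X]) : heat t (derivative p) = derivative (heat t p) := by
  have hp : p.natDegree < 2 * (p.natDegree + 1) := by omega
  rw [heat_eq_sum hp, heat_eq_sum (B := p.natDegree + 1)
    ((natDegree_derivative_le p).trans_lt (by omega)), map_sum]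
  simp only [map_smul, ← Function.iterate_succ_apply, ← Function.iterate_succ_apply']

theorem eval_heat_X_sub_C_sq [CharZero K] (t a : K) : (heat t ((X - C a) ^ 2)).eval a = t := by
  rw [heat_eq_sum (B := 2) (by rw [natDegree_pow, natDegree_X_sub_C]; omega)]
  simp [sum_range_succ, derivative_pow]

theorem add_pow_div_factorial [CharZero K] (a b : K) (m : ℕ) :
    (a + b) ^ m / m.factorial =
      ∑ k ∈ range (m + 1), a ^ k / k.factorial * (b ^ (m - k) / (m - k).factorial) := by
  rw [add_pow, sum_div]
  refine Finset.sum_congr rfl fun k hk => ?_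
  have := Nat.cast_ne_zero (R := K) |>.2 m.factorial_ne_zero
  rw [Nat.cast_choose K (Nat.lt_succ_iff.1 (mem_range.1 hk))]
  field_simp

theorem heat_heat [CharZero K] (s t : K) (p : K[X]) : heat s (heat t p) = heat (s + t) p := by
  set B := p.natDegree + 1
  have hp : p.natDegree < 2 * B := by omega
  rw [heat_eq_sum ((natDegree_heat_le t p).trans_lt hp), heat_eq_sum hp, heat_eq_sum hp]
  simp only [iterate_derivative_sum, iterate_derivative_smul, smul_sum, smul_smul,
    ← Function.iterate_add_apply, ← mul_add]
  have htrunc : ∀ k ∈ range B,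
      ∑ l ∈ range B, ((s / 2) ^ k / k.factorial * ((t / 2) ^ l / l.factorial)) •
        derivative^[2 * (k + l)] p =
      ∑ l ∈ range (B - k), ((s / 2) ^ k / k.factorial * ((t / 2) ^ l / l.factorial)) •
        derivative^[2 * (k + l)] p := by
    intro k _
    refine (sum_subset (range_subset_range.2 (Nat.sub_le B k)) fun l _ hl => ?_).symm
    rw [iterate_derivative_eq_zero (by simp at hl; omega), smul_zero]
  rw [Finset.sum_congr rfl htrunc, ← sum_range_diag_flip]
  refine Finset.sum_congr rfl fun m _ => ?_
  rw [add_div, add_pow_div_factorial, sum_smul]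
  refine Finset.sum_congr rfl fun k hk => ?_
  rw [Nat.add_sub_cancel' (Nat.lt_succ_iff.1 (mem_range.1 hk))]

theorem heat_mul_X [CharZero K] (t : K) (p : K[X]) :
    heat t (p * X) = heat t p * X + t • derivative (heat t p) := by
  set n := p.natDegree + 1
  have hpX : (p * X).natDegree < 2 * (n + 1) := by
    have := natDegree_mul_le (p := p) (q := X); simp at this; omega
  rw [heat_eq_sum hpX]
  nth_rw 1 [heat_eq_sum (B := n + 1) (by omega)]
  rw [heat_eq_sum (B := n) (by omega)]
  simp only [iterate_derivative_mul_X, smul_add, sum_add_distrib, sum_mul, smul_mul_assoc]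
  congr 1
  rw [sum_range_succ', map_sum, smul_sum]
  simp only [mul_zero, zero_smul, smul_zero, add_zero, derivative_smul,
    ← Function.iterate_succ_apply' derivative, smul_smul]
  refine Finset.sum_congr rfl fun j _ => ?_
  rw [show 2 * (j + 1) - 1 = (2 * j).succ by omega, ← Nat.cast_smul_eq_nsmul K, smul_smul]
  congr 1
  have := Nat.cast_ne_zero (R := K) |>.2 j.factorial_ne_zero
  push_cast [Nat.factorial_succ]
  field_simp
  ring

theorem heat_iterate_derivative_mul_X [CharZero K] (t : K) (p : K[X]) (k : ℕ) :
    heat t (derivative^[k] (p * X)) = heat t (derivative^[k] p) * X +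
      t • heat t (derivative^[k + 1] p) + k • heat t (derivative^[k - 1] p) := by
  rw [iterate_derivative_mul_X, map_add, map_nsmul, heat_mul_X, ← heat_derivative,
    Function.iterate_succ_apply']

theorem sum_range_succ_nsmul_shift [CharZero K] (t : K) (B : ℕ) (f g : ℕ → K[X])
    (hf : f B = 0) :
    ∑ k ∈ range (B + 1), (t ^ k / k.factorial) • k • (f (k - 1) * g k) =
      t • ∑ k ∈ range (B + 1), (t ^ k / k.factorial) • (f k * g (k + 1)) := by
  rw [sum_range_succ', sum_range_succ, hf, zero_mul, smul_zero, add_zero, smul_sum]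
  simp only [Nat.add_sub_cancel, ← Nat.cast_smul_eq_nsmul K, smul_smul,
    Nat.cast_zero, zero_smul, smul_zero, add_zero]
  refine Finset.sum_congr rfl fun k _ => ?_
  congr 1
  have := Nat.cast_ne_zero (R := K) |>.2 k.factorial_ne_zero
  push_cast [Nat.factorial_succ]
  field_simp
  ring

noncomputable def wickSum (t : K) (B : ℕ) (p q : K[X]) : K[X] :=
  ∑ k ∈ range B, (t ^ k / k.factorial) • (heat t (derivative^[k] p) * heat t (derivative^[k] q))

theorem wickSum_add_left (t : K) (B : ℕ) (p₁ p₂ q : K[X]) :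
    wickSum t B (p₁ + p₂) q = wickSum t B p₁ q + wickSum t B p₂ q := by
  simp only [wickSum, iterate_map_add, map_add, add_mul, smul_add, sum_add_distrib]

theorem wickSum_C_left (t c : K) (B : ℕ) (q : K[X]) :
    wickSum t (B + 1) (C c) q = c • heat t q := by
  rw [wickSum, sum_range_succ']
  simp [iterate_derivative_C, heat_C, smul_eq_C_mul]

theorem wickSum_mul_X_left [CharZero K] (t : K) (B : ℕ) (r q : K[X])
    (hr : derivative^[B] r = 0) :
    wickSum t (B + 1) (r * X) q = wickSum t (B + 1) r q * X +
      t • wickSum t (B + 1) (derivative r) q + t • wickSum t (B + 1) r (derivative q) := by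
  simp only [wickSum, heat_iterate_derivative_mul_X, add_mul, sum_add_distrib, smul_add,
    sum_mul, smul_mul_assoc]
  have hshift := sum_range_succ_nsmul_shift t B (fun k => heat t (derivative^[k] r))
    (fun k => heat t (derivative^[k] q)) (by rw [hr, map_zero])
  rw [hshift]
  simp only [smul_sum, ← Function.iterate_succ_apply, Function.iterate_succ_apply', smul_smul,
    mul_comm t, mul_right_comm _ X]

theorem heat_mul [CharZero K] (t : K) {B : ℕ} (p q : K[X]) (hB : p.natDegree < B) :
    heat t (p * q) = wickSum t B p q := by
  -- induction on `deg p`, splitting `p = r X + c` and using Stein's identity `heat_mul_X`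
  induction hd : p.natDegree using Nat.strong_induction_on generalizing p q with
  | _ d ih =>
  obtain ⟨B, rfl⟩ : ∃ B', B = B' + 1 := ⟨B - 1, by omega⟩
  rcases Nat.eq_zero_or_pos d with rfl | hd0
  · rw [eq_C_of_natDegree_eq_zero hd, wickSum_C_left, C_mul', map_smul]
  set r := p.divX
  have hr : r.natDegree = d - 1 := by rw [natDegree_divX_eq_natDegree_tsub_one, hd]
  have hdr : (derivative r).natDegree < d := (natDegree_derivative_le r).trans_lt (by omega)
  have ih_r (q : K[X]) : heat t (r * q) = wickSum t (B + 1) r q :=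
    ih _ (by omega) r q (by omega) hr
  have hp : p = r * X + C (p.coeff 0) := (divX_mul_X_add p).symm
  calc heat t (p * q)
      = heat t (r * q) * X + t • (heat t (derivative r * q) + heat t (r * derivative q))
          + p.coeff 0 • heat t q := by
        rw [← map_add, ← derivative_mul, heat_derivative, ← heat_mul_X, ← map_smul,
          ← C_mul', ← map_add]
        congr 1
        conv_lhs => rw [hp]
        ring
    _ = wickSum t (B + 1) p q := by
        rw [ih_r, ih _ hdr _ _ (by omega) rfl, ih_r, smul_add, ← add_assoc,
          ← wickSum_mul_X_left t B r q (iterate_derivative_eq_zero (by omega)), ← wickSum_C_left,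
          ← wickSum_add_left, ← hp]

theorem sum_mul_eval_eq_of_sum_mul_eval_heat_eq [CharZero K] {ι : Type*} [Fintype ι]
    (w u : ι → K) {s ρ U θ : K} {n : ℕ}
    (h : ∀ p : K[X], p.natDegree ≤ n →
      ∑ i, w i * (heat s p).eval (u i) = ρ * (heat θ p).eval U)
    {p : K[X]} (hp : p.natDegree ≤ n) :
    ∑ i, w i * p.eval (u i) = ρ * (heat (θ - s) p).eval U := by
  simpa only [heat_heat, add_neg_cancel, heat_zero, ← sub_eq_add_neg] using
    h (heat (-s) p) ((natDegree_heat_le _ _).trans hp)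

end Heat

theorem iterate_derivative_natDegree {R : Type*} [Semiring R] (p : R[X]) :
    derivative^[p.natDegree] p = C (p.natDegree.factorial • p.leadingCoeff) := by
  rw [eq_C_of_natDegree_eq_zero (p := derivative^[p.natDegree] p)
    (by have := natDegree_iterate_derivative p p.natDegree; omega),
    coeff_iterate_derivative, zero_add, Nat.descFactorial_self, leadingCoeff]

theorem linearMap_eq_of_forall_X_pow_eq {R M : Type*} [CommSemiring R] [AddCommMonoid M]
    [Module R M] {f g : R[X] →ₗ[R] M} {n : ℕ} (h : ∀ j ≤ n, f (X ^ j) = g (X ^ j))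
    {p : R[X]} (hp : p.natDegree ≤ n) : f p = g p := by
  rw [p.as_sum_range' (n + 1) (by omega)]
  simp only [map_sum, ← C_mul_X_pow_eq_monomial, ← smul_eq_C_mul, map_smul]
  exact Finset.sum_congr rfl fun j hj => by rw [h j (by simp at hj; omega)]

section Ordered

variable {K : Type*} [Field K] [LinearOrder K] [IsStrictOrderedRing K]

theorem eval_heat_mul_self_pos {t : K} (ht : 0 < t) {q : K[X]} (hq : q ≠ 0) (u : K) :
    0 < (heat t (q * q)).eval u := by
  rw [heat_mul t q q (B := q.natDegree + 1) (by omega), wickSum, eval_finsetSum]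
  simp only [eval_smul, eval_mul, smul_eq_mul]
  refine sum_pos' (fun k _ => mul_nonneg (by positivity) (mul_self_nonneg _))
    ⟨q.natDegree, self_mem_range_succ _, ?_⟩
  have hlead : (q.natDegree.factorial • q.leadingCoeff : K) ≠ 0 :=
    smul_ne_zero (Nat.factorial_ne_zero _) (leadingCoeff_ne_zero.2 hq)
  rw [iterate_derivative_natDegree, heat_C, eval_C]
  have := mul_self_pos.2 hlead
  positivity

theorem nonpos_of_sum_mul_eval_eq_eval_heat {ι : Type*} [Fintype ι] (w u : ι → K)
    {ρ U τ : K} (hρ : ρ ≠ 0)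
    (h : ∀ p : K[X], p.natDegree ≤ 2 * Fintype.card ι →
      ∑ i, w i * p.eval (u i) = ρ * (heat τ p).eval U) :
    τ ≤ 0 := by
  by_contra! hτ
  set q := ∏ i, (X - C (u i))
  have hq : q.natDegree = Fintype.card ι := natDegree_finsetProd_X_sub_C_eq_card _ _
  have hq0 : q ≠ 0 := (monic_prod_of_monic _ _ fun i _ => monic_X_sub_C (u i)).ne_zero
  have hvanish : ∑ i, w i * (q * q).eval (u i) = 0 :=
    sum_eq_zero fun i _ => by simp [q, eval_prod, prod_eq_zero (mem_univ i)]
  rw [h (q * q) (natDegree_mul_le.trans (by omega))] at hvanish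
  exact (mul_ne_zero hρ (eval_heat_mul_self_pos hτ hq0 U).ne') hvanish

end Ordered

end Polynomial

open Polynomial

theorem eval_heat_X_pow (j : ℕ) (u t : ℝ) : (heat t (X ^ j)).eval u = DeltaFun j u t := by
  rw [heat_eq_sum (B := j / 2 + 1) (by rw [natDegree_X_pow]; omega), eval_finsetSum, DeltaFun]
  refine Finset.sum_congr rfl fun k hk => ?_
  have h2k : 2 * k ≤ j := by simp at hk; omega
  rw [iterate_derivative_X_pow_eq_smul, eval_smul, eval_smul, eval_pow, eval_X, smul_eq_mul,
    smul_eq_mul, ← Nat.factorial_mul_descFactorial h2k]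
  have := Nat.cast_ne_zero (R := ℝ) |>.2 k.factorial_ne_zero
  have := Nat.cast_ne_zero (R := ℝ) |>.2 (j - 2 * k).factorial_ne_zero
  push_cast
  field_simp

theorem stmt15_general (N : ℕ) (hN : 1 ≤ N) (w u : Fin N → ℝ) (hw : ∀ i, 0 < w i)
    (σ2 : ℝ) (ρ U θ : ℝ)
    (h : ∀ j ≤ 2*N, ∑ i, w i * DeltaFun j (u i) σ2 = ρ * DeltaFun j U θ) :
    (∀ i, u i = U) ∧ σ2 = θ ∧ ∑ i, w i = ρ := by
  have hmoments (p : ℝ[X]) (hp : p.natDegree ≤ 2 * N) :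
      ∑ i, w i * (heat σ2 p).eval (u i) = ρ * (heat θ p).eval U := by
    simpa using linearMap_eq_of_forall_X_pow_eq (f := ∑ i, w i • (leval (u i) ∘ₗ heat σ2))
      (g := ρ • (leval U ∘ₗ heat θ)) (fun j hj => by simpa [eval_heat_X_pow] using h j hj) hp
  have hatoms (p : ℝ[X]) (hp : p.natDegree ≤ 2 * N) :
      ∑ i, w i * p.eval (u i) = ρ * (heat (θ - σ2) p).eval U :=
    sum_mul_eval_eq_of_sum_mul_eval_heat_eq w u hmoments hp
  have hmass : ∑ i, w i = ρ := by simpa [heat_one] using hatoms 1 (by simp)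
  have hρ : 0 < ρ := hmass ▸ Finset.sum_pos (fun i _ => hw i) ⟨⟨0, hN⟩, Finset.mem_univ _⟩
  have hspread : ∑ i, w i * (u i - U) ^ 2 = ρ * (θ - σ2) := by
    have := hatoms ((X - C U) ^ 2) (by rw [natDegree_pow, natDegree_X_sub_C]; omega)
    simpa [eval_heat_X_sub_C_sq] using this
  have hτ : θ - σ2 ≤ 0 :=
    nonpos_of_sum_mul_eval_eq_eval_heat w u hρ.ne' (by simpa using hatoms)
  have hspread_nonneg : 0 ≤ ∑ i, w i * (u i - U) ^ 2 :=
    Finset.sum_nonneg fun i _ => mul_nonneg (hw i).le (sq_nonneg _)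
  have hθ : σ2 = θ := by nlinarith
  refine ⟨fun i => ?_, hθ, hmass⟩
  have hzero := (Finset.sum_eq_zero_iff_of_nonneg fun i _ => mul_nonneg (hw i).le
    (sq_nonneg (u i - U))).1 (by rw [hspread, hθ, sub_self, mul_zero]) i (Finset.mem_univ i)
  simpa [(hw i).ne', sub_eq_zero] using hzero

/-- Equilibrium states of the Gaussian-EQMOM system lie in `Ω_W^{eq}`: if the first
`2N+1` moments of the mixture match those of the Gaussian `(ρ, U, θ)`, then all the
nodes equal `U`, the common variance equals `θ`, and the weights sum to `ρ`. -/
theorem stmt15 (N : ℕ) (hN : 1 ≤ N) (w u : Fin N → ℝ) (hw : ∀ i, 0 < w i)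
    (σ2 : ℝ) (hσ : 0 < σ2) (ρ U θ : ℝ)
    (h : ∀ j ≤ 2*N, ∑ i, w i * DeltaFun j (u i) σ2 = ρ * DeltaFun j U θ) :
    (∀ i, u i = U) ∧ σ2 = θ ∧ ∑ i, w i = ρ :=
  stmt15_general N hN w u hw σ2 ρ U θ h
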